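/- With V, A, K, s_k, t_k, d_k, u, Δ_{ik} and ψ as in the multi-commodity flow setting, there exists a feasible multi-commodity flow (a pseudo-flow f ≥ 0 with f_{ij} ≤ u_{ij} for all arcs and Δ_{ik}(f) = 0 for all vertices i and commodities k) if and only if there exists a zero-stable pseudo-flow, i.e. a stable pseudo-flow f with ψ(f_{ij}) = 0 for all (i,j) ∈ A and Δ_{ik}(f) = 0 for all i ∈ V, k ∈ K; moreover any zero-stable pseudo-flow is itself feasible. -/
import Mathlib


open Finset

variable {V K : Type*} [Fintype V] [Fintype K] [DecidableEq V] [DecidableEq K]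

/-- Total flow on arc `a`: the sum over all commodities of the flow of that commodity on `a`. -/
noncomputable def totalFlow (f : K → V × V → ℝ) (a : V × V) : ℝ := ∑ k : K, f k a

/-- Excess `Δ_{ik}` of commodity `k` at vertex `i`: inflow minus outflow, adjusted by
`+d_k` at the origin `s k` and `-d_k` at the destination `t k` (as in the paper). -/
noncomputable def excess (A : Finset (V × V)) (s t : K → V) (d : K → ℝ)
    (f : K → V × V → ℝ) (i : V) (k : K) : ℝ :=
  if i = s k then d k - ∑ a ∈ A.filter (fun a => a.1 = i), f k a
  else if i = t k then (∑ a ∈ A.filter (fun a => a.2 = i), f k a) - d k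
  else (∑ a ∈ A.filter (fun a => a.2 = i), f k a)
        - ∑ a ∈ A.filter (fun a => a.1 = i), f k a

/-- The objective `z` of Program (5):
`z(f) = ∑_{a ∈ A} ½ (max 0 (f_a - u_a))² + ∑_{i,k} ½ Δ_{ik}(f)²`. -/
noncomputable def obj (A : Finset (V × V)) (s t : K → V) (d : K → ℝ) (u : V × V → ℝ)
    (f : K → V × V → ℝ) : ℝ :=
  (∑ a ∈ A, (1 / 2) * (max 0 (totalFlow f a - u a)) ^ 2)
    + ∑ i : V, ∑ k : K, (1 / 2) * (excess A s t d f i k) ^ 2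

/-- A pseudo-flow `f ≥ 0` is stable if for every commodity `k` and arc `(i,j) ∈ A`:
the height difference equals the congestion on used arcs, and is at most the congestion
on unused arcs. -/
def IsStable (A : Finset (V × V)) (s t : K → V) (d : K → ℝ) (u : V × V → ℝ)
    (f : K → V × V → ℝ) : Prop :=
  (∀ k a, 0 ≤ f k a) ∧
  ∀ k : K, ∀ a ∈ A,
    (0 < f k a →
      excess A s t d f a.1 k - excess A s t d f a.2 k = max 0 (totalFlow f a - u a)) ∧
    (f k a = 0 →
      excess A s t d f a.1 k - excess A s t d f a.2 k ≤ max 0 (totalFlow f a - u a))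

/-- A feasible multi-commodity flow: nonnegative, respects capacities, and has zero excess
at every vertex for every commodity. -/
def IsFeasible (A : Finset (V × V)) (s t : K → V) (d : K → ℝ) (u : V × V → ℝ)
    (f : K → V × V → ℝ) : Prop :=
  (∀ k a, 0 ≤ f k a) ∧ (∀ a ∈ A, totalFlow f a ≤ u a) ∧
  (∀ i k, excess A s t d f i k = 0)

/-- Theorem 1: a feasible multi-commodity flow exists if and only if a zero-stable
pseudo-flow exists (a stable pseudo-flow with zero congestion on every arc and zero excess
everywhere); moreover any zero-stable pseudo-flow is itself feasible. -/
theorem feasible_iff_zero_stable (A : Finset (V × V)) (s t : K → V) (d : K → ℝ)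
    (u : V × V → ℝ)
    (hst : ∀ k, s k ≠ t k) (hd : ∀ k, 0 < d k) (hu : ∀ a ∈ A, 0 ≤ u a) :
    ((∃ f : K → V × V → ℝ, IsFeasible A s t d u f) ↔
      (∃ f : K → V × V → ℝ, IsStable A s t d u f ∧
        (∀ a ∈ A, max 0 (totalFlow f a - u a) = 0) ∧
        (∀ i k, excess A s t d f i k = 0))) ∧
    (∀ f : K → V × V → ℝ, IsStable A s t d u f →
      (∀ a ∈ A, max 0 (totalFlow f a - u a) = 0) →
      (∀ i k, excess A s t d f i k = 0) →
      IsFeasible A s t d u f) := by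
  constructor
  · constructor
    · rintro ⟨f, hpos, hcap, hex⟩
      refine ⟨f, ⟨hpos, fun k a ha => ?_⟩, fun a ha => ?_, hex⟩
      · have h0 : max 0 (totalFlow f a - u a) = 0 :=
          max_eq_left (by linarith [hcap a ha])
        rw [hex a.1 k, hex a.2 k, h0]
        exact ⟨fun _ => by ring, fun _ => by norm_num⟩
      · exact max_eq_left (by linarith [hcap a ha])
    · rintro ⟨f, ⟨hpos, _⟩, hcong, hex⟩
      exact ⟨f, hpos, fun a ha => by
        have := hcong a ha
        by_contra h
        have : 0 < totalFlow f a - u a := by linarith [not_le.mp h]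
        simp [max_eq_right this.le] at hcong
        linarith [hcong a.1 a.2 ha], hex⟩
  · rintro f ⟨hpos, _⟩ hcong hex
    refine ⟨hpos, fun a ha => ?_, hex⟩
    have := hcong a ha
    by_contra h
    have h1 : 0 < totalFlow f a - u a := by linarith [not_le.mp h]
    rw [max_eq_right h1.le] at this
    linarith
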